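/- Let ρ be an n×n density matrix with eigenvalues 0 ≤ λ₁ ≤ λ₂ ≤ ⋯ ≤ λ_n, let A, B be n×n self-adjoint complex matrices, and let q ∈ ℝ with |q| ≤ 1. Then (λ_n + |q|λ₁)²·|Tr[ρ[A₀,B₀]_{|q|}]|² ≤ (1+|q|)²·(λ_n − |q|λ₁)²·V_ρ(A)·V_ρ(B). -/

import Mathlib

open Matrix ComplexOrder

/-- `A₀ = A - Tr[ρA]·I`, the centered operator. -/
noncomputable def shift {n : ℕ} (ρ A : Matrix (Fin n) (Fin n) ℂ) : Matrix (Fin n) (Fin n) ℂ :=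
  A - (ρ * A).trace • (1 : Matrix (Fin n) (Fin n) ℂ)

/-- `V_ρ(A) = Tr[ρA²] - (Tr[ρA])²` (a real number for self-adjoint `A` and density `ρ`). -/
noncomputable def variance {n : ℕ} (ρ A : Matrix (Fin n) (Fin n) ℂ) : ℝ :=
  ((ρ * (A * A)).trace - ((ρ * A).trace) ^ 2).re

/-- the q-commutator `[A,B]_q = AB - q·BA`. -/
noncomputable def qComm {n : ℕ} (q : ℝ) (A B : Matrix (Fin n) (Fin n) ℂ) :
    Matrix (Fin n) (Fin n) ℂ :=
  A * B - (q : ℂ) • (B * A)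

/-- the q-anti-commutator `{A,B}_q = AB + q·BA`. -/
noncomputable def qAnti {n : ℕ} (q : ℝ) (A B : Matrix (Fin n) (Fin n) ℂ) :
    Matrix (Fin n) (Fin n) ℂ :=
  A * B + (q : ℂ) • (B * A)

/-- `lam` lists the eigenvalues of `ρ` (with multiplicity) in increasing order. -/
def IsOrderedEigenvalues {n : ℕ} {ρ : Matrix (Fin n) (Fin n) ℂ}
    (hρ : ρ.IsHermitian) (lam : Fin n → ℝ) : Prop :=
  Monotone lam ∧ ∃ σ : Equiv.Perm (Fin n), ∀ i, lam i = hρ.eigenvalues (σ i)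

open ComplexConjugate Set

/-! Conjugating by the eigenvector unitary of `ρ` changes none of the traces involved, so we may
assume `ρ = diag λ` with `0 ≤ m ≤ λⱼ ≤ M`. With `zⱼₖ = Xⱼₖ Yₖⱼ` one has `conj zⱼₖ = zₖⱼ`, hence
`2 Tr[ρ [X,Y]_p] = ∑ⱼₖ (λⱼ - p λₖ) zⱼₖ + (λₖ - p λⱼ) conj zⱼₖ`. For real `α, β` the norm of
`α z + β conj z` is at most `max |α + β| |α - β| * ‖z‖`; here `α + β = (1 - p)(λⱼ + λₖ)` and
`α - β = (1 + p)(λⱼ - λₖ)`, and both are at most `(1 + p)(M - p m)/(M + p m) · (λⱼ + λₖ)`.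
Cauchy–Schwarz with weights `λⱼ + λₖ` then ends the proof, because
`∑ⱼₖ (λⱼ + λₖ) ‖Xⱼₖ‖² = 2 Tr[ρ X²]`, and `Tr[ρ A₀²] = V_ρ(A)` when `Tr ρ = 1`. -/

lemma Complex.norm_ofReal_mul_add_ofReal_mul_conj_le (α β : ℝ) (z : ℂ) :
    ‖(α : ℂ) * z + β * conj z‖ ≤ max |α + β| |α - β| * ‖z‖ := by
  have hα : (α + β) ^ 2 ≤ max |α + β| |α - β| ^ 2 := by
    rw [← sq_abs]; gcongr; exact le_max_left _ _
  have hβ : (α - β) ^ 2 ≤ max |α + β| |α - β| ^ 2 := by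
    rw [← sq_abs (α - β)]; gcongr; exact le_max_right _ _
  have hnorm :
      ‖(α : ℂ) * z + β * conj z‖ ^ 2 = (α + β) ^ 2 * z.re ^ 2 + (α - β) ^ 2 * z.im ^ 2 := by
    rw [Complex.sq_norm, Complex.normSq_apply]
    simp only [Complex.add_re, Complex.add_im, Complex.mul_re, Complex.mul_im, Complex.ofReal_re,
      Complex.ofReal_im, Complex.conj_re, Complex.conj_im]
    ring
  refine pow_le_pow_iff_left₀ (norm_nonneg _) (by positivity) two_ne_zero |>.mp ?_
  rw [hnorm, mul_pow, Complex.sq_norm, Complex.normSq_apply]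
  nlinarith [mul_le_mul_of_nonneg_right hα (sq_nonneg z.re),
    mul_le_mul_of_nonneg_right hβ (sq_nonneg z.im)]

lemma norm_qComm_coeff_mul_add_le {m M p a b : ℝ} (hm : 0 ≤ m) (hp₀ : 0 ≤ p) (hp₁ : p ≤ 1)
    (ha : a ∈ Icc m M) (hb : b ∈ Icc m M) (z : ℂ) :
    (M + p * m) * ‖((a - p * b : ℝ) : ℂ) * z + ((b - p * a : ℝ) : ℂ) * conj z‖ ≤
      (1 + p) * (M - p * m) * (a + b) * ‖z‖ := by
  obtain ⟨hma, haM⟩ := ha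
  obtain ⟨hmb, hbM⟩ := hb
  have hpm : p * m ≤ m := mul_le_of_le_one_left hm hp₁
  have hMpm : 0 ≤ M + p * m := by nlinarith [mul_nonneg hp₀ hm]
  have hsum : (M + p * m) * |a - p * b + (b - p * a)| ≤ (1 + p) * (M - p * m) * (a + b) := by
    rw [show a - p * b + (b - p * a) = (1 - p) * (a + b) by ring,
      abs_of_nonneg (by nlinarith)]
    nlinarith [mul_nonneg hp₀ (sub_nonneg.2 (hma.trans haM)), mul_nonneg hm hm]
  have hdiff : (M + p * m) * |a - p * b - (b - p * a)| ≤ (1 + p) * (M - p * m) * (a + b) := by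
    rw [show a - p * b - (b - p * a) = (1 + p) * (a - b) by ring, abs_mul,
      abs_of_nonneg (by linarith : 0 ≤ 1 + p)]
    have hab : p * m * a ≤ b * M := mul_le_mul (by linarith) haM (by linarith) (by linarith)
    have hba : p * m * b ≤ a * M := mul_le_mul (by linarith) hbM (by linarith) (by linarith)
    rcases abs_cases (a - b) with ⟨h, -⟩ | ⟨h, -⟩ <;> rw [h] <;> nlinarith
  calc (M + p * m) * ‖((a - p * b : ℝ) : ℂ) * z + ((b - p * a : ℝ) : ℂ) * conj z‖
      ≤ (M + p * m) * (max |a - p * b + (b - p * a)| |a - p * b - (b - p * a)| * ‖z‖) := by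
        gcongr
        exact Complex.norm_ofReal_mul_add_ofReal_mul_conj_le _ _ z
    _ = max ((M + p * m) * |a - p * b + (b - p * a)|) ((M + p * m) * |a - p * b - (b - p * a)|)
          * ‖z‖ := by rw [← mul_assoc, mul_max_of_nonneg _ _ hMpm]
    _ ≤ (1 + p) * (M - p * m) * (a + b) * ‖z‖ := by gcongr; exact max_le hsum hdiff

section Diagonal

variable {n : ℕ} {X Y : Matrix (Fin n) (Fin n) ℂ}

lemma Matrix.trace_diagonal_mul_mul (d : Fin n → ℂ) (X Y : Matrix (Fin n) (Fin n) ℂ) :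
    (diagonal d * (X * Y)).trace = ∑ j, ∑ k, d j * (X j k * Y k j) := by
  simp_rw [trace, diag_apply, diagonal_mul, mul_apply, Finset.mul_sum]

lemma Matrix.trace_diagonal_mul_qComm (d : Fin n → ℝ) (p : ℝ) (X Y : Matrix (Fin n) (Fin n) ℂ) :
    (diagonal (fun j ↦ (d j : ℂ)) * qComm p X Y).trace =
      ∑ j, ∑ k, ((d j - p * d k : ℝ) : ℂ) * (X j k * Y k j) := by
  rw [qComm, Matrix.mul_sub, trace_sub, Matrix.mul_smul, trace_smul, trace_diagonal_mul_mul,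
    trace_diagonal_mul_mul, Finset.sum_comm (f := fun j k ↦ (d j : ℂ) * (Y j k * X k j)),
    smul_eq_mul, Finset.mul_sum, ← Finset.sum_sub_distrib]
  refine Finset.sum_congr rfl fun j _ ↦ ?_
  rw [Finset.mul_sum, ← Finset.sum_sub_distrib]
  refine Finset.sum_congr rfl fun k _ ↦ ?_
  push_cast
  ring

lemma Matrix.IsHermitian.norm_apply_comm (hX : X.IsHermitian) (j k : Fin n) :
    ‖X k j‖ = ‖X j k‖ := by
  rw [← hX.apply j k, norm_star]

lemma Matrix.two_mul_trace_diagonal_mul_qComm (d : Fin n → ℝ) (p : ℝ)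
    (hX : X.IsHermitian) (hY : Y.IsHermitian) :
    2 * (diagonal (fun j ↦ (d j : ℂ)) * qComm p X Y).trace =
      ∑ j, ∑ k, (((d j - p * d k : ℝ) : ℂ) * (X j k * Y k j) +
        ((d k - p * d j : ℝ) : ℂ) * conj (X j k * Y k j)) := by
  have hconj (j k : Fin n) : conj (X j k * Y k j) = X k j * Y j k := by
    rw [map_mul, ← hX.apply k j, ← hY.apply j k]; rfl
  simp only [hconj, Finset.sum_add_distrib]
  rw [Finset.sum_comm (f := fun j k ↦ ((d k - p * d j : ℝ) : ℂ) * (X k j * Y j k)),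
    trace_diagonal_mul_qComm, two_mul]

lemma Matrix.two_mul_re_trace_diagonal_mul_self (d : Fin n → ℝ) (hX : X.IsHermitian) :
    2 * (diagonal (fun j ↦ (d j : ℂ)) * (X * X)).trace.re =
      ∑ j, ∑ k, (d j + d k) * ‖X j k‖ ^ 2 := by
  have hre (j k : Fin n) : ((d j : ℂ) * (X j k * X k j)).re = d j * ‖X j k‖ ^ 2 := by
    rw [← hX.apply k j, Complex.star_def, Complex.mul_conj, Complex.normSq_eq_norm_sq]
    norm_cast
  simp only [trace_diagonal_mul_mul, Complex.re_sum, hre, add_mul, Finset.sum_add_distrib]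
  rw [two_mul, Finset.sum_comm (f := fun j k ↦ d k * ‖X j k‖ ^ 2)]
  simp only [hX.norm_apply_comm]

lemma Matrix.sq_sum_weighted_norm_mul_norm_le {d : Fin n → ℝ} (hd : ∀ j, 0 ≤ d j)
    (hX : X.IsHermitian) (hY : Y.IsHermitian) :
    (∑ j, ∑ k, (d j + d k) * (‖X j k‖ * ‖Y j k‖)) ^ 2 ≤
      (2 * (diagonal (fun j ↦ (d j : ℂ)) * (X * X)).trace.re) *
        (2 * (diagonal (fun j ↦ (d j : ℂ)) * (Y * Y)).trace.re) := by
  rw [two_mul_re_trace_diagonal_mul_self d hX, two_mul_re_trace_diagonal_mul_self d hY]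
  simp only [← Finset.sum_product']
  refine Finset.sum_sq_le_sum_mul_sum_of_sq_le_mul _ (fun jk _ ↦ ?_) (fun jk _ ↦ ?_)
    (fun jk _ ↦ le_of_eq (by ring)) <;>
  exact mul_nonneg (add_nonneg (hd _) (hd _)) (sq_nonneg _)

theorem Matrix.sq_mul_sq_norm_trace_diagonal_mul_qComm_le {d : Fin n → ℝ} {m M p : ℝ}
    (hm : 0 ≤ m) (hd : ∀ j, d j ∈ Icc m M) (hp₀ : 0 ≤ p) (hp₁ : p ≤ 1)
    (hX : X.IsHermitian) (hY : Y.IsHermitian) :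
    (M + p * m) ^ 2 * ‖(diagonal (fun j ↦ (d j : ℂ)) * qComm p X Y).trace‖ ^ 2 ≤
      (1 + p) ^ 2 * (M - p * m) ^ 2 * (diagonal (fun j ↦ (d j : ℂ)) * (X * X)).trace.re *
        (diagonal (fun j ↦ (d j : ℂ)) * (Y * Y)).trace.re := by
  rcases isEmpty_or_nonempty (Fin n) with _ | ⟨⟨j₀⟩⟩
  · simp [trace]
  have hMpm : 0 ≤ M + p * m := by nlinarith [(hd j₀).1, (hd j₀).2, mul_nonneg hp₀ hm]
  set T := (diagonal (fun j ↦ (d j : ℂ)) * qComm p X Y).trace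
  set S := ∑ j, ∑ k, (d j + d k) * (‖X j k‖ * ‖Y j k‖)
  have hTS : (M + p * m) * (2 * ‖T‖) ≤ (1 + p) * (M - p * m) * S := calc
    (M + p * m) * (2 * ‖T‖) = (M + p * m) * ‖2 * T‖ := by rw [norm_mul, Complex.norm_two]
    _ ≤ (M + p * m) * ∑ j, ∑ k, ‖((d j - p * d k : ℝ) : ℂ) * (X j k * Y k j) +
          ((d k - p * d j : ℝ) : ℂ) * conj (X j k * Y k j)‖ := by
      rw [two_mul_trace_diagonal_mul_qComm d p hX hY]
      gcongr
      exact (norm_sum_le _ _).trans (Finset.sum_le_sum fun j _ ↦ norm_sum_le _ _)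
    _ ≤ ∑ j, ∑ k, (1 + p) * (M - p * m) * (d j + d k) * ‖X j k * Y k j‖ := by
      simp only [Finset.mul_sum]
      refine Finset.sum_le_sum fun j _ ↦ Finset.sum_le_sum fun k _ ↦ ?_
      exact norm_qComm_coeff_mul_add_le hm hp₀ hp₁ (hd j) (hd k) _
    _ = (1 + p) * (M - p * m) * S := by
      simp only [S, Finset.mul_sum, norm_mul, hY.norm_apply_comm, mul_assoc]
  have hS := sq_sum_weighted_norm_mul_norm_le (fun j ↦ hm.trans (hd j).1) hX hY
  nlinarith [pow_le_pow_left₀ (by positivity) hTS 2,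
    mul_le_mul_of_nonneg_left hS (sq_nonneg ((1 + p) * (M - p * m)))]

end Diagonal

lemma Matrix.trace_conjStarAlgAut {ι R : Type*} [Fintype ι] [DecidableEq ι] [CommRing R]
    [StarRing R] (u : unitary (Matrix ι ι R)) (X : Matrix ι ι R) :
    (Unitary.conjStarAlgAut R _ u X).trace = X.trace := by
  rw [Unitary.conjStarAlgAut_apply, trace_mul_cycle, Unitary.coe_star_mul_self, one_mul]

lemma map_qComm {n : ℕ} {F : Type*}
    [FunLike F (Matrix (Fin n) (Fin n) ℂ) (Matrix (Fin n) (Fin n) ℂ)]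
    [AlgHomClass F ℂ (Matrix (Fin n) (Fin n) ℂ) (Matrix (Fin n) (Fin n) ℂ)] (f : F) (p : ℝ)
    (X Y : Matrix (Fin n) (Fin n) ℂ) : f (qComm p X Y) = qComm p (f X) (f Y) := by
  simp only [qComm, map_sub, map_mul, map_smul]

theorem Matrix.IsHermitian.sq_mul_sq_norm_trace_mul_qComm_le {n : ℕ}
    {ρ X Y : Matrix (Fin n) (Fin n) ℂ} {m M p : ℝ} (hρ : ρ.IsHermitian) (hm : 0 ≤ m)
    (hspec : ∀ j, hρ.eigenvalues j ∈ Icc m M) (hp₀ : 0 ≤ p) (hp₁ : p ≤ 1)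
    (hX : X.IsHermitian) (hY : Y.IsHermitian) :
    (M + p * m) ^ 2 * ‖(ρ * qComm p X Y).trace‖ ^ 2 ≤
      (1 + p) ^ 2 * (M - p * m) ^ 2 * (ρ * (X * X)).trace.re * (ρ * (Y * Y)).trace.re := by
  set φ := Unitary.conjStarAlgAut ℂ _ (star hρ.eigenvectorUnitary)
  have htrace (Z : Matrix (Fin n) (Fin n) ℂ) :
      (ρ * Z).trace = (diagonal (fun j ↦ (hρ.eigenvalues j : ℂ)) * φ Z).trace := by
    rw [← trace_conjStarAlgAut _ (ρ * Z), map_mul, hρ.conjStarAlgAut_star_eigenvectorUnitary]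
    rfl
  rw [htrace, htrace, htrace, map_qComm, map_mul, map_mul]
  exact sq_mul_sq_norm_trace_diagonal_mul_qComm_le hm hspec hp₀ hp₁
    (hX.isSelfAdjoint.map φ).isHermitian (hY.isSelfAdjoint.map φ).isHermitian

lemma Matrix.IsHermitian.isSelfAdjoint_trace_mul {ι : Type*} [Fintype ι] {A B : Matrix ι ι ℂ}
    (hA : A.IsHermitian) (hB : B.IsHermitian) : IsSelfAdjoint (A * B).trace := by
  rw [IsSelfAdjoint, ← trace_conjTranspose, conjTranspose_mul, hA.eq, hB.eq, trace_mul_comm]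

section Centering

variable {n : ℕ} {ρ : Matrix (Fin n) (Fin n) ℂ}

lemma isHermitian_shift (hρ : ρ.IsHermitian) {A : Matrix (Fin n) (Fin n) ℂ}
    (hA : A.IsHermitian) : (shift ρ A).IsHermitian :=
  hA.sub ((hρ.isSelfAdjoint_trace_mul hA).smul (IsSelfAdjoint.one _)).isHermitian

lemma trace_mul_shift_mul_shift (htr : ρ.trace = 1) (A B : Matrix (Fin n) (Fin n) ℂ) :
    (ρ * (shift ρ A * shift ρ B)).trace = (ρ * (A * B)).trace - (ρ * A).trace * (ρ * B).trace := by
  simp only [shift, Matrix.sub_mul, Matrix.mul_sub, Matrix.mul_smul, Matrix.smul_mul,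
    Matrix.mul_one, Matrix.one_mul, trace_sub, trace_smul, smul_eq_mul, htr]
  ring

lemma variance_eq_re_trace_mul_shift_mul_self (htr : ρ.trace = 1) (A : Matrix (Fin n) (Fin n) ℂ) :
    variance ρ A = (ρ * (shift ρ A * shift ρ A)).trace.re := by
  rw [trace_mul_shift_mul_shift htr, variance, sq]

end Centering

lemma IsOrderedEigenvalues.eigenvalues_mem_Icc {n : ℕ} {ρ : Matrix (Fin (n + 1)) (Fin (n + 1)) ℂ}
    {hρ : ρ.IsHermitian} {lam : Fin (n + 1) → ℝ} (h : IsOrderedEigenvalues hρ lam)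
    (i : Fin (n + 1)) : hρ.eigenvalues i ∈ Icc (lam 0) (lam (Fin.last n)) := by
  obtain ⟨hmono, σ, hσ⟩ := h
  rw [← σ.apply_symm_apply i, ← hσ]
  exact ⟨hmono (Fin.zero_le _), hmono (Fin.le_last _)⟩

/-- Refined q-commutator uncertainty relation, case `|q| ≤ 1`:
`(λₙ + |q|λ₁)²·|Tr[ρ[A₀,B₀]_{|q|}]|² ≤ (1+|q|)²·(λₙ − |q|λ₁)²·V_ρ(A)·V_ρ(B)`. -/
theorem refined_qcommutator_uncertainty_of_abs_le_one {n : ℕ}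
    (ρ A B : Matrix (Fin (n + 1)) (Fin (n + 1)) ℂ)
    (hρ : ρ.PosSemidef) (htr : ρ.trace = 1)
    (hA : A.IsHermitian) (hB : B.IsHermitian)
    (lam : Fin (n + 1) → ℝ) (hlam : IsOrderedEigenvalues hρ.1 lam)
    (hlam0 : 0 ≤ lam 0) (q : ℝ) (hq : |q| ≤ 1) :
    (lam (Fin.last n) + |q| * lam 0) ^ 2 *
        ‖(ρ * qComm |q| (shift ρ A) (shift ρ B)).trace‖ ^ 2 ≤
      (1 + |q|) ^ 2 * (lam (Fin.last n) - |q| * lam 0) ^ 2 *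
        variance ρ A * variance ρ B := by
  rw [variance_eq_re_trace_mul_shift_mul_self htr, variance_eq_re_trace_mul_shift_mul_self htr]
  exact hρ.1.sq_mul_sq_norm_trace_mul_qComm_le hlam0 hlam.eigenvalues_mem_Icc (abs_nonneg q) hq
    (isHermitian_shift hρ.1 hA) (isHermitian_shift hρ.1 hB)
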